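/- arXiv:1305.4971 — 2 statements merged into one kernel-verified Lean document; each statement's English description precedes it below -/
import Mathlib

section
/- For every integer s ≥ 0 and every integer k lying in J_s (i.e. 2^(Q(s)) + Q(s+1) − Q(s) + Ξ ≤ k < 2^(Q(s+1))), one has N(k) = Q(s+1) + Ξ·(s+1) and B(k) = 2(s+1). -/
/-!
Put `b_t = 2^(q t²) - 1` and `d_t = Q(t+1) - Q(t) + Ξ = 2qt + q + Ξ`. Then `x_j = 0` exactly when
`j` lies in one of the blocks `[b_t, b_t + d_t)`, and `2^(q-1) ≥ q + 1 + Ξ` makes every block end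
before the next one starts. For `k ∈ J_s`, i.e. `b_s + d_s < k ≤ b_{s+1}`, the range `[0, k)`
contains the blocks `t ≤ s` and no other zero, so `N(k) = Σ_{t ≤ s} d_t = Q(s+1) + Ξ(s+1)`.
The value of `x` changes between `j` and `j + 1` exactly when `j + 1` is a block endpoint; the
endpoints below `k` are `b_0 = 0, b_0 + d_0, …, b_s, b_s + d_s`, and as `b_0 = 0` is not of the
form `j + 1`, `B(k) = 1 + (2s + 1)`.
-/

open scoped Classical ENNReal
open Real Set Filter

/-- The quadratic function `Q(s) = q·s²`. -/
noncomputable def Qf (q : ℤ) (s : ℝ) : ℝ := (q : ℝ) * s ^ 2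

/-- The half-open interval `I_s = [2^(Q(s)), 2^(Q(s)) + Q(s+1) − Q(s) + Ξ)`. -/
noncomputable def Iset (q Ξ : ℤ) (s : ℝ) : Set ℝ :=
  Set.Ico ((2 : ℝ) ^ (Qf q s)) ((2 : ℝ) ^ (Qf q s) + Qf q (s + 1) - Qf q s + (Ξ : ℝ))

/-- The half-open interval `J_s = [2^(Q(s)) + Q(s+1) − Q(s) + Ξ, 2^(Q(s+1)))`. -/
noncomputable def Jset (q Ξ : ℤ) (s : ℝ) : Set ℝ :=
  Set.Ico ((2 : ℝ) ^ (Qf q s) + Qf q (s + 1) - Qf q s + (Ξ : ℝ)) ((2 : ℝ) ^ (Qf q (s + 1)))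

/-- The sequence `(x_j)` in `{0,1}`: `x_j = 0` iff `j + 1 ∈ I_s` for some integer `s ≥ 0`. -/
noncomputable def xseq (q Ξ : ℤ) (j : ℕ) : ℕ :=
  if ∃ s : ℕ, ((j : ℝ) + 1) ∈ Iset q Ξ (s : ℝ) then 0 else 1

/-- `N(k) = #{ j ∈ {0,…,k−1} : x_j = 0 }`, with `N(0) = 0`. -/
noncomputable def Nf (q Ξ : ℤ) (k : ℕ) : ℕ :=
  ((Finset.range k).filter (fun j => xseq q Ξ j = 0)).card

/-- `B(0) = 0`, `B(1) = 1`, and for `k ≥ 2`,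
`B(k) = 1 + #{ j ∈ {0,…,k−2} : x_j ≠ x_{j+1} }`. -/
noncomputable def Bf (q Ξ : ℤ) (k : ℕ) : ℕ :=
  if k = 0 then 0
  else 1 + ((Finset.range (k - 1)).filter (fun j => xseq q Ξ j ≠ xseq q Ξ (j + 1))).card

/-- The length `|J_s| = 2^(Q(s+1)) − 2^(Q(s)) − (Q(s+1) − Q(s) + Ξ)` of `J_s`. -/
noncomputable def Jlen (q Ξ : ℤ) (s : ℝ) : ℝ :=
  (2 : ℝ) ^ (Qf q (s + 1)) - (2 : ℝ) ^ (Qf q s) - (Qf q (s + 1) - Qf q s + (Ξ : ℝ))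

/-- `λ(s) = 1/|J_s|`. -/
noncomputable def lamf (q Ξ : ℤ) (s : ℝ) : ℝ := 1 / Jlen q Ξ s

/-- The two-variable series `Π(τ,λ) = Σ_{k≥0} 2^(−λk − τ·N(k) + τ·ξ·B(k))`, a sum in `[0,∞]`. -/
noncomputable def Pi2 (q Ξ : ℤ) (ξ τ lam : ℝ) : ℝ≥0∞ :=
  ∑' k : ℕ, ENNReal.ofReal
    ((2 : ℝ) ^ (-lam * (k : ℝ) - τ * (Nf q Ξ k : ℝ) + τ * ξ * (Bf q Ξ k : ℝ)))

open Finset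

section Blocks

def InBlocks (b d : ℕ → ℕ) (j : ℕ) : Prop := ∃ t, b t ≤ j ∧ j < b t + d t

/-- The endpoints `b 0, b 0 + d 0, b 1, b 1 + d 1, …` of the blocks, in increasing order. -/
def boundary (b d : ℕ → ℕ) (i : ℕ) : ℕ := b (i / 2) + i % 2 * d (i / 2)

variable {b d : ℕ → ℕ}

lemma boundary_two_mul (t : ℕ) : boundary b d (2 * t) = b t := by
  simp [boundary]

lemma boundary_two_mul_add_one (t : ℕ) : boundary b d (2 * t + 1) = b t + d t := by
  simp [boundary, Nat.add_mod, Nat.add_div]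

lemma Nat.count_mem_range_of_strictMono {c : ℕ → ℕ} (hc : StrictMono c) {i k : ℕ}
    (hi : c i < k) (hk : k ≤ c (i + 1)) : Nat.count (· ∈ Set.range c) k = i + 1 := by
  have : {n ∈ Finset.range k | n ∈ Set.range c} = (Finset.range (i + 1)).image c := by
    ext n
    simp only [Finset.mem_filter, Finset.mem_range, Finset.mem_image, Set.mem_range]
    constructor
    · rintro ⟨hn, t, rfl⟩
      exact ⟨t, hc.lt_iff_lt.1 (hn.trans_le hk), rfl⟩
    · rintro ⟨t, ht, rfl⟩
      exact ⟨(hc.monotone (Nat.lt_succ_iff.1 ht)).trans_lt hi, t, rfl⟩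
  rw [Nat.count_eq_card_filter_range, this, Finset.card_image_of_injective _ hc.injective,
    Finset.card_range]

variable (hsep : ∀ t, b t + d t < b (t + 1))
include hsep

lemma strictMono_of_add_lt_succ : StrictMono b :=
  strictMono_nat_of_lt_succ fun t => (Nat.le_add_right _ _).trans_lt (hsep t)

lemma apply_add_lt_apply_of_lt {s t : ℕ} (h : s < t) : b s + d s < b t :=
  (hsep s).trans_le ((strictMono_of_add_lt_succ hsep).monotone h)

lemma filter_inBlocks_range {s k : ℕ} (hs : b s + d s ≤ k) (hk : k ≤ b (s + 1)) :
    {j ∈ Finset.range k | InBlocks b d j} =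
      (Finset.range (s + 1)).biUnion fun t => Finset.Ico (b t) (b t + d t) := by
  ext j
  simp only [Finset.mem_filter, Finset.mem_range, Finset.mem_biUnion, Finset.mem_Ico]
  unfold InBlocks
  constructor
  · rintro ⟨hj, t, ht⟩
    refine ⟨t, ?_, ht⟩
    by_contra! h
    have := (strictMono_of_add_lt_succ hsep).monotone h
    omega
  · rintro ⟨t, ht, hj⟩
    have : b t + d t ≤ b s + d s := by
      rcases (Nat.lt_succ_iff.1 ht).lt_or_eq with h | rfl
      · exact (apply_add_lt_apply_of_lt hsep h).le.trans (Nat.le_add_right _ _)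
      · rfl
    exact ⟨by omega, t, hj⟩

lemma card_filter_inBlocks_range {s k : ℕ} (hs : b s + d s ≤ k) (hk : k ≤ b (s + 1)) :
    #{j ∈ Finset.range k | InBlocks b d j} = ∑ t ∈ Finset.range (s + 1), d t := by
  rw [filter_inBlocks_range hsep hs hk, Finset.card_biUnion]
  · simp
  · intro t _ u _ htu
    rw [Function.onFun, Finset.disjoint_left]
    intro j hjt hju
    rw [Finset.mem_Ico] at hjt hju
    rcases htu.lt_or_gt with h | h
    · have := apply_add_lt_apply_of_lt hsep h; omega
    · have := apply_add_lt_apply_of_lt hsep h; omega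

variable (hd : ∀ t, 0 < d t)
include hd

lemma strictMono_boundary : StrictMono (boundary b d) := by
  refine strictMono_nat_of_lt_succ fun i => ?_
  obtain ⟨t, rfl | rfl⟩ := Nat.even_or_odd' i
  · rw [boundary_two_mul, boundary_two_mul_add_one]
    exact Nat.lt_add_of_pos_right (hd t)
  · rw [boundary_two_mul_add_one, show 2 * t + 1 + 1 = 2 * (t + 1) by ring, boundary_two_mul]
    exact hsep t

lemma not_inBlocks_iff_inBlocks_succ {j : ℕ} :
    ¬(InBlocks b d j ↔ InBlocks b d (j + 1)) ↔ j + 1 ∈ Set.range (boundary b d) := by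
  have hmono := (strictMono_of_add_lt_succ hsep).monotone
  constructor
  · intro h
    by_cases hj : InBlocks b d j
    · obtain ⟨t, ht⟩ := hj
      have hj' : ¬InBlocks b d (j + 1) := fun h' => h ⟨fun _ => h', fun _ => ⟨t, ht⟩⟩
      refine ⟨2 * t + 1, ?_⟩
      rw [boundary_two_mul_add_one]
      by_contra hne
      exact hj' ⟨t, by omega, by omega⟩
    · obtain ⟨t, ht⟩ : InBlocks b d (j + 1) := by tauto
      refine ⟨2 * t, ?_⟩
      rw [boundary_two_mul]
      by_contra hne
      exact hj ⟨t, by omega, by omega⟩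
  · rintro ⟨i, hi⟩
    obtain ⟨t, rfl | rfl⟩ := Nat.even_or_odd' i
    · rw [boundary_two_mul] at hi
      have hj : ¬InBlocks b d j := by
        rintro ⟨u, hu⟩
        rcases lt_or_ge u t with h | h
        · have := apply_add_lt_apply_of_lt hsep h; omega
        · have := hmono h; omega
      exact fun h => hj (h.2 ⟨t, by omega, by have := hd t; omega⟩)
    · rw [boundary_two_mul_add_one] at hi
      have hj' : ¬InBlocks b d (j + 1) := by
        rintro ⟨u, hu⟩
        rcases lt_trichotomy u t with h | rfl | h
        · have := apply_add_lt_apply_of_lt hsep h; omega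
        · omega
        · have := apply_add_lt_apply_of_lt hsep h; omega
      exact fun h => hj' (h.1 ⟨t, by have := hd t; omega, by omega⟩)

lemma one_add_card_filter_not_inBlocks_iff_succ (hb : b 0 = 0) {s k : ℕ} (hs : b s + d s < k)
    (hk : k ≤ b (s + 1)) :
    1 + #{j ∈ Finset.range (k - 1) | ¬(InBlocks b d j ↔ InBlocks b d (j + 1))} = 2 * (s + 1) := by
  have hcount := Nat.count_mem_range_of_strictMono (strictMono_boundary hsep hd)
    (i := 2 * s + 1) (by rwa [boundary_two_mul_add_one])
    (by rwa [show 2 * s + 1 + 1 = 2 * (s + 1) by ring, boundary_two_mul])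
  obtain ⟨k, rfl⟩ : ∃ k', k = k' + 1 := ⟨k - 1, by omega⟩
  rw [Nat.count_succ', if_pos ⟨0, by simp [boundary, hb]⟩, Nat.count_eq_card_filter_range]
    at hcount
  rw [Nat.add_sub_cancel, Finset.filter_congr fun j _ => not_inBlocks_iff_inBlocks_succ hsep hd]
  omega

end Blocks

/-- `x_j = 0` is tied to `j + 1 ∈ I_t`, so with `q = n` and `q + Ξ = m` the zeros of `x` form the
blocks `[2^(n t²) - 1, 2^(n t²) - 1 + 2 n t + m)`. -/
def blockStart (n t : ℕ) : ℕ := 2 ^ (n * t ^ 2) - 1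

def blockLength (n m t : ℕ) : ℕ := 2 * n * t + m

lemma blockLength_add_two_le {n m : ℕ} (hn : 1 ≤ n) (hm : m + 1 ≤ 2 ^ (n - 1)) (t : ℕ) :
    blockLength n m t + 2 ≤ 2 ^ (n * (2 * t + 1)) := by
  have hsplit : 2 ^ (n * (2 * t + 1)) = 2 ^ (n - 1) * 2 ^ (2 * n * t + 1) := by
    rw [← pow_add]
    congr 1
    zify [hn]
    ring
  have hexp : 2 * n * t + 2 ≤ 2 ^ (2 * n * t + 1) := Nat.lt_two_pow_self
  have hprod := Nat.mul_le_mul hm hexp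
  rw [hsplit, blockLength]
  nlinarith [Nat.zero_le (m * n * t)]

lemma blockStart_add_blockLength_lt {n m : ℕ} (hn : 1 ≤ n) (hm : m + 1 ≤ 2 ^ (n - 1)) (t : ℕ) :
    blockStart n t + blockLength n m t < blockStart n (t + 1) := by
  have hsplit : 2 ^ (n * (t + 1) ^ 2) = 2 ^ (n * t ^ 2) * 2 ^ (n * (2 * t + 1)) := by
    rw [← pow_add]
    ring_nf
  have hA : 1 ≤ 2 ^ (n * t ^ 2) := Nat.one_le_two_pow
  have hG := Nat.mul_le_mul_left (2 ^ (n * t ^ 2)) (blockLength_add_two_le hn hm t)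
  have hAL := Nat.le_mul_of_pos_left (blockLength n m t) hA
  rw [blockStart, blockStart, hsplit]
  rw [mul_add] at hG
  omega

lemma two_rpow_Qf (n s : ℕ) : (2 : ℝ) ^ Qf n s = blockStart n s + 1 := by
  have hQ : Qf n s = ((n * s ^ 2 : ℕ) : ℝ) := by simp [Qf]
  rw [hQ, Real.rpow_natCast, blockStart, Nat.cast_sub Nat.one_le_two_pow]
  push_cast
  ring

lemma two_rpow_Qf_add_Qf_succ_sub (n m s : ℕ) :
    (2 : ℝ) ^ Qf n s + Qf n (s + 1) - Qf n s + ((m - n : ℤ) : ℝ) =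
      blockStart n s + 1 + blockLength n m s := by
  rw [two_rpow_Qf, blockLength]
  simp only [Qf]
  push_cast
  ring

lemma succ_mem_Iset_iff (n m s j : ℕ) :
    (j : ℝ) + 1 ∈ Iset n (m - n) s ↔ blockStart n s ≤ j ∧ j < blockStart n s + blockLength n m s := by
  rw [Iset, Set.mem_Ico, two_rpow_Qf_add_Qf_succ_sub, two_rpow_Qf]
  norm_cast
  omega

lemma mem_Jset_iff (n m s k : ℕ) :
    (k : ℝ) ∈ Jset n (m - n) s ↔
      blockStart n s + blockLength n m s < k ∧ k ≤ blockStart n (s + 1) := by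
  rw [Jset, Set.mem_Ico, two_rpow_Qf_add_Qf_succ_sub,
    show (s : ℝ) + 1 = (s + 1 : ℕ) by push_cast; rfl, two_rpow_Qf]
  norm_cast
  omega

lemma xseq_eq_zero_iff (n m j : ℕ) :
    xseq n (m - n) j = 0 ↔ InBlocks (blockStart n) (blockLength n m) j := by
  simp [xseq, succ_mem_Iset_iff, InBlocks]

lemma xseq_ne_xseq_succ_iff (n m j : ℕ) :
    xseq n (m - n) j ≠ xseq n (m - n) (j + 1) ↔
      ¬(InBlocks (blockStart n) (blockLength n m) j ↔
        InBlocks (blockStart n) (blockLength n m) (j + 1)) := by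
  rw [← xseq_eq_zero_iff, ← xseq_eq_zero_iff]
  unfold xseq
  split_ifs <;> simp

lemma sum_range_succ_blockLength (n m s : ℕ) :
    ∑ t ∈ Finset.range (s + 1), blockLength n m t = n * s * (s + 1) + m * (s + 1) := by
  induction s with
  | zero => simp [blockLength]
  | succ s ih =>
    rw [Finset.sum_range_succ, ih, blockLength]
    ring

lemma exists_nat_params {q Ξ : ℤ} (hqΞ : 1 ≤ q + Ξ)
    (hpow : (q : ℝ) + 1 + (Ξ : ℝ) ≤ (2 : ℝ) ^ ((q : ℝ) - 1)) :
    ∃ n m : ℕ, q = n ∧ Ξ = m - n ∧ 1 ≤ n ∧ 1 ≤ m ∧ m + 1 ≤ 2 ^ (n - 1) := by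
  have hq : 1 ≤ q := by
    have h : (2 : ℝ) ^ (1 : ℝ) ≤ 2 ^ ((q : ℝ) - 1) := by
      rw [Real.rpow_one]
      exact le_trans (by exact_mod_cast (by omega : (2 : ℤ) ≤ q + 1 + Ξ)) hpow
    have := (Real.rpow_le_rpow_left_iff one_lt_two).1 h
    exact_mod_cast (by linarith : (1 : ℝ) ≤ q)
  obtain ⟨n, rfl⟩ : ∃ n : ℕ, q = n := ⟨q.toNat, by omega⟩
  obtain ⟨m, rfl⟩ : ∃ m : ℕ, Ξ = m - n := ⟨(n + Ξ).toNat, by omega⟩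
  refine ⟨n, m, rfl, rfl, by omega, by omega, ?_⟩
  rw [show ((n : ℤ) : ℝ) - 1 = (n - 1 : ℕ) by push_cast [show 1 ≤ n by omega]; ring,
    Real.rpow_natCast] at hpow
  push_cast at hpow
  exact_mod_cast (by linarith : (m : ℝ) + 1 ≤ 2 ^ (n - 1))

theorem stmt2_general (Ξ q : ℤ) (hqΞ : 1 ≤ q + Ξ)
    (hpow : (q : ℝ) + 1 + (Ξ : ℝ) ≤ (2 : ℝ) ^ ((q : ℝ) - 1)) :
    ∀ s : ℕ, ∀ k : ℕ, (k : ℝ) ∈ Jset q Ξ (s : ℝ) →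
      (Nf q Ξ k : ℝ) = Qf q ((s : ℝ) + 1) + (Ξ : ℝ) * ((s : ℝ) + 1) ∧
      Bf q Ξ k = 2 * (s + 1) := by
  obtain ⟨n, m, rfl, rfl, hn, hm, hpow⟩ := exists_nat_params hqΞ hpow
  have hsep := blockStart_add_blockLength_lt hn hpow
  have hd : ∀ t, 0 < blockLength n m t := fun t => by simp only [blockLength]; omega
  intro s k hk
  obtain ⟨hs, hk⟩ := (mem_Jset_iff n m s k).1 hk
  constructor
  · rw [Nf, Finset.filter_congr fun j _ => xseq_eq_zero_iff n m j,
      card_filter_inBlocks_range hsep hs.le hk, sum_range_succ_blockLength]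
    simp only [Qf]
    push_cast
    ring
  · rw [Bf, if_neg (by omega), Finset.filter_congr fun j _ => xseq_ne_xseq_succ_iff n m j]
    exact one_add_card_filter_not_inBlocks_iff_succ hsep hd (by simp [blockStart]) hs hk

theorem stmt2 (Ξ q : ℤ) (hq : 3 ≤ q) (hqΞ : 1 ≤ q + Ξ)
    (hpow : (q : ℝ) + 1 + (Ξ : ℝ) ≤ (2 : ℝ) ^ ((q : ℝ) - 1)) :
    ∀ s : ℕ, ∀ k : ℕ, (k : ℝ) ∈ Jset q Ξ (s : ℝ) →
      (Nf q Ξ k : ℝ) = Qf q ((s : ℝ) + 1) + (Ξ : ℝ) * ((s : ℝ) + 1) ∧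
      Bf q Ξ k = 2 * (s + 1) :=
  stmt2_general Ξ q hqΞ hpow
end

section
/- For every real number s ≥ 0 and every τ > 0 one has (1/8)·2^((1−τ)·Q(⌊s⌋+1) − τ·(Ξ−2ξ)·(⌊s⌋+1)) ≤ Π(τ, λ(s)). -/
open scoped Classical ENNReal
open Real Set Filter

/-!
Write `n = ⌊s⌋`. The zeros of `x` fill exactly the integer blocks `I_m`, and the condition
`2 ^ (q - 1) ≥ q + 1 + Ξ` makes every `I_m` end before the midpoint of `[2 ^ Q(m), 2 ^ Q(m+1))`;
likewise `|J_s| ≥ 2 ^ (Q(s+1) - 1)`, so `λ(s) k ≤ 2` for all `k ≤ 2 ^ Q(n+1)`. For `k` in the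
gap `J_n` the counts are frozen at `N(k) = Σ_{m ≤ n} |I_m| = Q(n+1) + (n+1) Ξ` and `B(k) = 2n + 2`
(each block adds two runs), so each of the at least `2 ^ Q(n+1) / 2` terms of `Π` indexed by
`J_n` is at least `2 ^ (-2 - τ N + τ ξ B)`, and these terms alone give the bound.
-/

namespace Nat

variable {p : ℕ → Prop} [DecidablePred p] {a b : ℕ}

theorem count_eq_add_sub_of_forall (hab : a ≤ b) (h : ∀ j, a ≤ j → j < b → p j) :
    count p b = count p a + (b - a) := by
  obtain ⟨d, rfl⟩ := Nat.exists_eq_add_of_le hab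
  rw [count_add, count_of_forall fun j hj => h (a + j) (by omega) (by omega),
    Nat.add_sub_cancel_left]

theorem count_eq_of_forall_not (hab : a ≤ b) (h : ∀ j, a ≤ j → j < b → ¬ p j) :
    count p b = count p a := by
  obtain ⟨d, rfl⟩ := Nat.exists_eq_add_of_le hab
  rw [count_add, count_of_forall_not fun j hj => h (a + j) (by omega) (by omega), add_zero]

end Nat

theorem ENNReal.ofReal_card_mul_le_tsum {α : Type*} (s : Finset α) {f : α → ℝ} {c : ℝ}
    (hc : ∀ k ∈ s, c ≤ f k) : ENNReal.ofReal (s.card * c) ≤ ∑' k, ENNReal.ofReal (f k) := by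
  calc ENNReal.ofReal (s.card * c) = ∑ _k ∈ s, ENNReal.ofReal c := by
        rw [Finset.sum_const, nsmul_eq_mul, ENNReal.ofReal_mul (Nat.cast_nonneg _),
          ENNReal.ofReal_natCast]
    _ ≤ ∑ k ∈ s, ENNReal.ofReal (f k) :=
        Finset.sum_le_sum fun k hk => ENNReal.ofReal_le_ofReal (hc k hk)
    _ ≤ ∑' k, ENNReal.ofReal (f k) := ENNReal.sum_le_tsum s

theorem one_add_le_two_rpow_two_mul {t : ℝ} (ht : 0 ≤ t) : 1 + t ≤ (2 : ℝ) ^ (2 * t) := by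
  rw [Real.rpow_def_of_pos two_pos]
  nlinarith [Real.add_one_le_exp (Real.log 2 * (2 * t)), Real.log_two_gt_d9]

def IsRunStart (x : ℕ → ℕ) (j : ℕ) : Prop := j = 0 ∨ x (j - 1) ≠ x j

/-- The left end point `2 ^ Q(n)` of `I_n`, for `n : ℕ`. -/
def Istart (q : ℤ) (n : ℕ) : ℕ := 2 ^ (q.toNat * n ^ 2)

/-- The length `Q(n+1) − Q(n) + Ξ` of `I_n`, for `n : ℕ`. -/
def Ilen (q Ξ : ℤ) (n : ℕ) : ℕ := ((2 * n + 1) * q + Ξ).toNat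

section Blocks

variable {q Ξ : ℤ}

theorem two_rpow_Qf_natCast (hq : 0 ≤ q) (n : ℕ) : (2 : ℝ) ^ Qf q n = Istart q n := by
  have hQ : Qf q n = ((q.toNat * n ^ 2 : ℕ) : ℝ) := by
    have hq' : ((q.toNat : ℕ) : ℝ) = q := by exact_mod_cast Int.toNat_of_nonneg hq
    rw [Qf, ← hq']
    push_cast
    ring
  rw [hQ, Real.rpow_natCast, Istart, Nat.cast_pow, Nat.cast_ofNat]

theorem Istart_pos (q : ℤ) (n : ℕ) : 0 < Istart q n := Nat.two_pow_pos _

theorem Istart_mono (q : ℤ) : Monotone (Istart q) := fun _ _ h =>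
  Nat.pow_le_pow_right two_pos (Nat.mul_le_mul_left _ (Nat.pow_le_pow_left h 2))

theorem Ilen_intCast (hq : 0 ≤ q) (hqΞ : 1 ≤ q + Ξ) (n : ℕ) :
    (Ilen q Ξ n : ℤ) = (2 * n + 1) * q + Ξ :=
  Int.toNat_of_nonneg (by nlinarith)

theorem Ilen_pos (hq : 0 ≤ q) (hqΞ : 1 ≤ q + Ξ) (n : ℕ) : 0 < Ilen q Ξ n := by
  have := Ilen_intCast hq hqΞ n
  nlinarith

theorem Ilen_cast (hq : 0 ≤ q) (hqΞ : 1 ≤ q + Ξ) (n : ℕ) :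
    (Ilen q Ξ n : ℝ) = Qf q (n + 1) - Qf q n + Ξ := by
  rw [← Int.cast_natCast, Ilen_intCast hq hqΞ, Qf, Qf]
  push_cast
  ring

theorem natCast_add_one_mem_Iset_iff (hq : 0 ≤ q) (hqΞ : 1 ≤ q + Ξ) (m j : ℕ) :
    ((j : ℝ) + 1) ∈ Iset q Ξ m ↔ Istart q m ≤ j + 1 ∧ j + 1 < Istart q m + Ilen q Ξ m := by
  rw [Iset, Set.mem_Ico, add_sub_assoc, add_assoc, ← Ilen_cast hq hqΞ,
    two_rpow_Qf_natCast hq]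
  norm_cast

theorem xseq_eq_zero_iff_s6 (hq : 0 ≤ q) (hqΞ : 1 ≤ q + Ξ) (j : ℕ) :
    xseq q Ξ j = 0 ↔ ∃ m, Istart q m ≤ j + 1 ∧ j + 1 < Istart q m + Ilen q Ξ m := by
  simp only [xseq, natCast_add_one_mem_Iset_iff hq hqΞ]
  split_ifs with h <;> simpa using h

theorem two_rpow_Qf_add_le (hq : 0 ≤ q) (hqΞ : 1 ≤ q + Ξ)
    (hpow : (q : ℝ) + 1 + Ξ ≤ (2 : ℝ) ^ ((q : ℝ) - 1)) {s : ℝ} (hs : 0 ≤ s) :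
    (2 : ℝ) ^ Qf q s + (Qf q (s + 1) - Qf q s + Ξ) ≤ (2 : ℝ) ^ (Qf q (s + 1) - 1) := by
  have hq' : (0 : ℝ) ≤ q := by exact_mod_cast hq
  have hqΞ' : (1 : ℝ) ≤ q + Ξ := by exact_mod_cast hqΞ
  set a := (2 : ℝ) ^ Qf q s
  have ha : 1 ≤ a := Real.one_le_rpow one_le_two (by unfold Qf; positivity)
  have hqs : 0 ≤ (q : ℝ) * s := mul_nonneg hq' hs
  have hsplit : (2 : ℝ) ^ (Qf q (s + 1) - 1) = a * 2 ^ ((q : ℝ) - 1) * 2 ^ (2 * (q * s)) := by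
    rw [← Real.rpow_add two_pos, ← Real.rpow_add two_pos, Qf, Qf]
    ring_nf
  calc a + (Qf q (s + 1) - Qf q s + Ξ) = a + (q + Ξ) + 2 * (q * s) := by unfold Qf; ring
    _ ≤ a * (q + 1 + Ξ) * (1 + q * s) := by
        nlinarith [mul_nonneg (sub_nonneg.2 ha) (by linarith : (0 : ℝ) ≤ q + Ξ),
          mul_nonneg (by nlinarith : (0 : ℝ) ≤ a * (q + 1 + Ξ) - 2) hqs]
    _ ≤ a * 2 ^ ((q : ℝ) - 1) * 2 ^ (2 * (q * s)) := by
        gcongr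
        exact one_add_le_two_rpow_two_mul hqs
    _ = (2 : ℝ) ^ (Qf q (s + 1) - 1) := hsplit.symm

theorem Nf_eq_count (k : ℕ) : Nf q Ξ k = Nat.count (fun j => xseq q Ξ j = 0) k :=
  (Nat.count_eq_card_filter_range _ _).symm

theorem Bf_eq_count (k : ℕ) : Bf q Ξ k = Nat.count (IsRunStart (xseq q Ξ)) k := by
  cases k with
  | zero => simp [Bf]
  | succ k =>
    rw [Nat.count_succ', Nat.count_eq_card_filter_range, Bf, if_neg k.succ_ne_zero,
      Nat.add_sub_cancel, add_comm]
    simp [IsRunStart]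

variable (hq : 0 ≤ q) (hqΞ : 1 ≤ q + Ξ) (hpow : (q : ℝ) + 1 + Ξ ≤ (2 : ℝ) ^ ((q : ℝ) - 1))
include hq hqΞ hpow

theorem two_rpow_Qf_sub_one_le_Jlen {s : ℝ} (hs : 0 ≤ s) :
    (2 : ℝ) ^ (Qf q (s + 1) - 1) ≤ Jlen q Ξ s := by
  have h := two_rpow_Qf_add_le hq hqΞ hpow hs
  have hhalf : (2 : ℝ) ^ Qf q (s + 1) = 2 * 2 ^ (Qf q (s + 1) - 1) := by
    rw [Real.rpow_sub two_pos, Real.rpow_one]; ring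
  rw [Jlen]
  linarith

theorem Jlen_pos {s : ℝ} (hs : 0 ≤ s) : 0 < Jlen q Ξ s :=
  (Real.rpow_pos_of_pos two_pos _).trans_le (two_rpow_Qf_sub_one_le_Jlen hq hqΞ hpow hs)

theorem two_mul_Istart_add_Ilen_le (n : ℕ) :
    2 * (Istart q n + Ilen q Ξ n) ≤ Istart q (n + 1) := by
  have h := two_rpow_Qf_add_le hq hqΞ hpow (Nat.cast_nonneg' n)
  rw [← Ilen_cast hq hqΞ, Real.rpow_sub two_pos, Real.rpow_one, ← Nat.cast_add_one,
    two_rpow_Qf_natCast hq, two_rpow_Qf_natCast hq] at h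
  have : (2 * (Istart q n + Ilen q Ξ n) : ℝ) ≤ Istart q (n + 1) := by linarith
  exact_mod_cast this

theorem Istart_add_Ilen_lt (n : ℕ) : Istart q n + Ilen q Ξ n < Istart q (n + 1) := by
  have := two_mul_Istart_add_Ilen_le hq hqΞ hpow n
  have := Istart_pos q n
  omega

theorem xseq_eq_one (m j : ℕ) (h₁ : Istart q m + Ilen q Ξ m ≤ j + 1)
    (h₂ : j + 1 < Istart q (m + 1)) : xseq q Ξ j = 1 := by
  have hI : ¬ ∃ t, Istart q t ≤ j + 1 ∧ j + 1 < Istart q t + Ilen q Ξ t := by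
    rintro ⟨t, ht₁, ht₂⟩
    rcases lt_trichotomy t m with htm | rfl | htm
    · have := Istart_add_Ilen_lt hq hqΞ hpow t
      have := Istart_mono q (by omega : t + 1 ≤ m)
      omega
    · omega
    · have := Istart_mono q (by omega : m + 1 ≤ t)
      omega
  simp only [xseq, natCast_add_one_mem_Iset_iff hq hqΞ, if_neg hI]

theorem Nf_eq_of_mem_gap {m k : ℕ} (h₁ : Istart q m + Ilen q Ξ m ≤ k)
    (h₂ : k < Istart q (m + 1)) : Nf q Ξ k = Nf q Ξ (Istart q m - 1) + Ilen q Ξ m := by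
  have := Istart_pos q m
  rw [Nf_eq_count, Nf_eq_count,
    Nat.count_eq_of_forall_not (a := Istart q m + Ilen q Ξ m - 1) (b := k) (by omega),
    Nat.count_eq_add_sub_of_forall (a := Istart q m - 1) (b := Istart q m + Ilen q Ξ m - 1)
      (by omega)]
  · congr 1; omega
  · exact fun j _ _ => (xseq_eq_zero_iff_s6 hq hqΞ j).2 ⟨m, by omega, by omega⟩
  · intro j _ _
    rw [xseq_eq_one hq hqΞ hpow m j (by omega) (by omega)]
    exact one_ne_zero

theorem isRunStart_Istart_sub_one (m : ℕ) : IsRunStart (xseq q Ξ) (Istart q m - 1) := by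
  cases m with
  | zero => exact Or.inl (by simp [Istart])
  | succ m =>
    have := Istart_add_Ilen_lt hq hqΞ hpow m
    have := Istart_pos q m
    have := Ilen_pos hq hqΞ (m + 1)
    right
    rw [xseq_eq_one hq hqΞ hpow m (Istart q (m + 1) - 1 - 1) (by omega) (by omega),
      (xseq_eq_zero_iff_s6 hq hqΞ (Istart q (m + 1) - 1)).2 ⟨m + 1, by omega, by omega⟩]
    exact one_ne_zero

/-- For `k ∈ J_m` the two new runs are those starting at both ends of the block `I_m`. -/
theorem Bf_eq_of_mem_gap {m k : ℕ} (h₁ : Istart q m + Ilen q Ξ m ≤ k)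
    (h₂ : k < Istart q (m + 1)) : Bf q Ξ k = Bf q Ξ (Istart q m - 1) + 2 := by
  have := Istart_pos q m
  have := Ilen_pos hq hqΞ m
  have hzero : ∀ j, Istart q m - 1 ≤ j → j < Istart q m + Ilen q Ξ m - 1 → xseq q Ξ j = 0 :=
    fun j _ _ => (xseq_eq_zero_iff_s6 hq hqΞ j).2 ⟨m, by omega, by omega⟩
  have hone : ∀ j, Istart q m + Ilen q Ξ m - 1 ≤ j → j < k → xseq q Ξ j = 1 :=
    fun j _ _ => xseq_eq_one hq hqΞ hpow m j (by omega) (by omega)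
  set e := Istart q m + Ilen q Ξ m - 1
  have hstart : IsRunStart (xseq q Ξ) e := by
    right
    rw [hzero (e - 1) (by omega) (by omega), hone e le_rfl (by omega)]
    exact zero_ne_one
  rw [Bf_eq_count, Bf_eq_count, Nat.count_eq_of_forall_not (a := e + 1) (b := k) (by omega),
    Nat.count_succ, if_pos hstart,
    Nat.count_eq_of_forall_not (a := Istart q m - 1 + 1) (b := e) (by omega), Nat.count_succ,
    if_pos (isRunStart_Istart_sub_one hq hqΞ hpow m)]
  · rintro j hj₁ hj₂ (hj | hj)
    · omega
    · exact hj (by rw [hzero j (by omega) hj₂, hzero (j - 1) (by omega) (by omega)])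
  · rintro j hj₁ hj₂ (hj | hj)
    · omega
    · exact hj (by rw [hone j (by omega) hj₂, hone (j - 1) (by omega) (by omega)])

theorem Nf_of_mem_gap (n : ℕ) {k : ℕ} (h₁ : Istart q n + Ilen q Ξ n ≤ k)
    (h₂ : k < Istart q (n + 1)) : (Nf q Ξ k : ℝ) = Qf q (n + 1) + (n + 1) * Ξ := by
  induction n generalizing k with
  | zero =>
    rw [Nf_eq_of_mem_gap hq hqΞ hpow h₁ h₂, Nat.cast_add, Ilen_cast hq hqΞ]
    simp [Istart, Nf, Qf]
  | succ n ih =>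
    have := Istart_add_Ilen_lt hq hqΞ hpow n
    rw [Nf_eq_of_mem_gap hq hqΞ hpow h₁ h₂, Nat.cast_add, ih (by omega) (by omega),
      Ilen_cast hq hqΞ]
    push_cast
    ring

theorem Bf_of_mem_gap (n : ℕ) {k : ℕ} (h₁ : Istart q n + Ilen q Ξ n ≤ k)
    (h₂ : k < Istart q (n + 1)) : Bf q Ξ k = 2 * n + 2 := by
  induction n generalizing k with
  | zero =>
    rw [Bf_eq_of_mem_gap hq hqΞ hpow h₁ h₂]
    simp [Istart, Bf]
  | succ n ih =>
    have := Istart_add_Ilen_lt hq hqΞ hpow n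
    rw [Bf_eq_of_mem_gap hq hqΞ hpow h₁ h₂, ih (by omega) (by omega)]
    ring

theorem lamf_nonneg {s : ℝ} (hs : 0 ≤ s) : 0 ≤ lamf q Ξ s :=
  one_div_nonneg.2 (Jlen_pos hq hqΞ hpow hs).le

theorem lamf_mul_Istart_floor_add_one_le_two {s : ℝ} (hs : 0 ≤ s) :
    lamf q Ξ s * Istart q (⌊s⌋₊ + 1) ≤ 2 := by
  have hJ := two_rpow_Qf_sub_one_le_Jlen hq hqΞ hpow hs
  rw [Real.rpow_sub two_pos, Real.rpow_one] at hJ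
  have hQ : Qf q (⌊s⌋₊ + 1 : ℕ) ≤ Qf q (s + 1) := by
    have hq' : (0 : ℝ) ≤ q := by exact_mod_cast hq
    have hn : ((⌊s⌋₊ + 1 : ℕ) : ℝ) ≤ s + 1 := by push_cast; linarith [Nat.floor_le hs]
    unfold Qf
    gcongr
  have hI : (Istart q (⌊s⌋₊ + 1) : ℝ) ≤ 2 ^ Qf q (s + 1) := by
    rw [← two_rpow_Qf_natCast hq]
    exact Real.rpow_le_rpow_of_exponent_le one_le_two hQ
  rw [lamf, one_div, inv_mul_le_iff₀ (Jlen_pos hq hqΞ hpow hs)]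
  linarith


theorem Pi2_exponent_ge_of_mem_gap {s : ℝ} (hs : 0 ≤ s) (τ ξ : ℝ) {k : ℕ}
    (h₁ : Istart q ⌊s⌋₊ + Ilen q Ξ ⌊s⌋₊ ≤ k) (h₂ : k < Istart q (⌊s⌋₊ + 1)) :
    -2 - τ * (Qf q (⌊s⌋₊ + 1) + (⌊s⌋₊ + 1) * Ξ) + τ * ξ * (2 * ⌊s⌋₊ + 2) ≤
      -lamf q Ξ s * k - τ * (Nf q Ξ k : ℝ) + τ * ξ * (Bf q Ξ k : ℝ) := by
  have hk : lamf q Ξ s * k ≤ 2 :=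
    (mul_le_mul_of_nonneg_left (by exact_mod_cast h₂.le) (lamf_nonneg hq hqΞ hpow hs)).trans
      (lamf_mul_Istart_floor_add_one_le_two hq hqΞ hpow hs)
  rw [Nf_of_mem_gap hq hqΞ hpow _ h₁ h₂, Bf_of_mem_gap hq hqΞ hpow _ h₁ h₂]
  push_cast
  linarith

end Blocks

theorem stmt6_general (Ξ q : ℤ) (hq : 3 ≤ q) (hqΞ : 1 ≤ q + Ξ)
    (hpow : (q : ℝ) + 1 + (Ξ : ℝ) ≤ (2 : ℝ) ^ ((q : ℝ) - 1))
    (ξ : ℝ) :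
    ∀ s : ℝ, 0 ≤ s → ∀ τ : ℝ, 0 < τ →
      ENNReal.ofReal ((1 / 8) * (2 : ℝ) ^ ((1 - τ) * Qf q ((Nat.floor s : ℝ) + 1)
          - τ * ((Ξ : ℝ) - 2 * ξ) * ((Nat.floor s : ℝ) + 1))) ≤
        Pi2 q Ξ ξ τ (lamf q Ξ s) := by
  intro s hs τ _
  have hq₀ : 0 ≤ q := by omega
  set n := ⌊s⌋₊
  set b : ℝ := -2 - τ * (Qf q (n + 1) + (n + 1) * Ξ) + τ * ξ * (2 * n + 2)
  have hterm : ∀ k ∈ Finset.Ico (Istart q n + Ilen q Ξ n) (Istart q (n + 1)),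
      (2 : ℝ) ^ b ≤ (2 : ℝ) ^ (-lamf q Ξ s * k - τ * (Nf q Ξ k : ℝ) + τ * ξ * (Bf q Ξ k : ℝ)) :=
    fun k hk => Real.rpow_le_rpow_of_exponent_le one_le_two <|
      Pi2_exponent_ge_of_mem_gap hq₀ hqΞ hpow hs τ ξ (Finset.mem_Ico.1 hk).1 (Finset.mem_Ico.1 hk).2
  refine (ENNReal.ofReal_le_ofReal ?_).trans (ENNReal.ofReal_card_mul_le_tsum _ hterm)
  have hLR := two_mul_Istart_add_Ilen_le hq₀ hqΞ hpow n
  have hR := two_rpow_Qf_natCast hq₀ (n + 1)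
  push_cast at hR
  rw [Nat.card_Ico, Nat.cast_sub (by omega), show (1 - τ) * Qf q (n + 1) - τ * (Ξ - 2 * ξ) * (n + 1)
    = Qf q (n + 1) + b + 2 by ring, Real.rpow_add two_pos, Real.rpow_add two_pos, hR,
    show (1 / 8 : ℝ) * (Istart q (n + 1) * 2 ^ b * 2 ^ (2 : ℝ)) = Istart q (n + 1) / 2 * 2 ^ b by
      rw [Real.rpow_two]; ring]
  gcongr
  have : ((2 * (Istart q n + Ilen q Ξ n) : ℕ) : ℝ) ≤ Istart q (n + 1) := by exact_mod_cast hLR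
  push_cast at this ⊢
  linarith

theorem stmt6 (Ξ q : ℤ) (hq : 3 ≤ q) (hqΞ : 1 ≤ q + Ξ)
    (hpow : (q : ℝ) + 1 + (Ξ : ℝ) ≤ (2 : ℝ) ^ ((q : ℝ) - 1))
    (ξ : ℝ) (hξ1 : 1 ≤ (Ξ : ℝ) - 2 * ξ) (hξ2 : (Ξ : ℝ) - 2 * ξ ≤ 2) :
    ∀ s : ℝ, 0 ≤ s → ∀ τ : ℝ, 0 < τ →
      ENNReal.ofReal ((1 / 8) * (2 : ℝ) ^ ((1 - τ) * Qf q ((Nat.floor s : ℝ) + 1)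
          - τ * ((Ξ : ℝ) - 2 * ξ) * ((Nat.floor s : ℝ) + 1))) ≤
        Pi2 q Ξ ξ τ (lamf q Ξ s) :=
  stmt6_general Ξ q hq hqΞ hpow ξ
end
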